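/- arXiv:2303.05894 — 3 statements merged into one kernel-verified Lean document; each statement's English description precedes it below -/
import Mathlib

section
/- Let P_j be self-adjoint mutually orthogonal projections summing to id_H, A_j ∈ L(H') self-adjoint, S ∈ L(H) and T_j ∈ L(H') unitary with T_j = exp(-i t B_j) for self-adjoint B_j. Then exp(-i t ∑_j (S† P_j S) ⊗ (T_j† A_j T_j)) = (S ⊗ id)† T† U T (S ⊗ id), where T = exp(-i t ∑_j P_j ⊗ B_j) and U = exp(-i t ∑_j P_j ⊗ A_j). -/
/-!
Because the `P j` are complete orthogonal projections, `X ↦ ∑ j, P j ⊗ₖ X j` is an algebra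
homomorphism from `ι → Matrix n n` into the block matrices, compatible with `ᴴ` since the `P j`
are Hermitian. It therefore commutes with `exp`, which identifies `exp (-i t ∑ j, P j ⊗ₖ B j)`
with `W = ∑ j, P j ⊗ₖ T j`, and it maps the unitaries `T j` to a unitary `W`. Conjugating
`∑ j, P j ⊗ₖ A j` by the unitary `W * (S ⊗ₖ 1)` gives `∑ j, (Sᴴ * P j * S) ⊗ₖ ((T j)ᴴ * A j * T j)`,
and `exp` commutes with unitary conjugation.
-/

open Matrix Kronecker

namespace Matrix

theorem sum_kronecker {ι l m n p α : Type*} [NonUnitalNonAssocSemiring α] (s : Finset ι)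
    (A : ι → Matrix l m α) (B : Matrix n p α) :
    (∑ j ∈ s, A j) ⊗ₖ B = ∑ j ∈ s, A j ⊗ₖ B := by
  ext ⟨i₁, i₂⟩ ⟨j₁, j₂⟩
  simp [Matrix.sum_apply, Finset.sum_mul]

theorem conjTranspose_kronecker_one_mul_kronecker_mul {m n R : Type*} [Fintype m] [Fintype n]
    [DecidableEq n] [CommRing R] [StarRing R] (S A : Matrix m m R) (Y : Matrix n n R) :
    (S ⊗ₖ (1 : Matrix n n R))ᴴ * (A ⊗ₖ Y) * (S ⊗ₖ 1) = (Sᴴ * A * S) ⊗ₖ Y := by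
  rw [conjTranspose_kronecker, conjTranspose_one, ← mul_kronecker_mul, ← mul_kronecker_mul,
    one_mul, mul_one]

theorem exp_conjTranspose_mul_mul_of_mem_unitaryGroup {m 𝔸 : Type*} [Fintype m] [DecidableEq m]
    [NormedCommRing 𝔸] [NormedAlgebra ℚ 𝔸] [CompleteSpace 𝔸] [StarRing 𝔸]
    {V : Matrix m m 𝔸} (hV : V ∈ unitaryGroup m 𝔸) (X : Matrix m m 𝔸) :
    NormedSpace.exp (Vᴴ * X * V) = Vᴴ * NormedSpace.exp X * V := by
  have hinv : V⁻¹ = Vᴴ := inv_eq_left_inv (Unitary.star_mul_self_of_mem hV)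
  rw [← hinv, exp_conj' V X (Unitary.toUnits ⟨V, hV⟩).isUnit]

theorem exp_pi_apply {ι n 𝕜 : Type*} [Fintype ι] [Fintype n] [DecidableEq n] [RCLike 𝕜]
    (X : ι → Matrix n n 𝕜) (j : ι) : NormedSpace.exp X j = NormedSpace.exp (X j) := by
  -- instance search does not find the family `∀ i, CompleteSpace (Matrix n n 𝕜)` by itself
  open scoped Norms.Operator in exact @Pi.coe_exp _ _ _ _ _ (fun _ => inferInstance) X j

variable {ι m n R : Type*} [Fintype ι] [CommRing R]

theorem smul_sum_kronecker (c : R) (P : ι → Matrix m m R) (X : ι → Matrix n n R) :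
    c • ∑ j, P j ⊗ₖ X j = ∑ j, P j ⊗ₖ (c • X j) := by
  simp only [Finset.smul_sum, kronecker_smul]

theorem conjTranspose_sum_kronecker [StarRing R] {P : ι → Matrix m m R}
    (hP : ∀ j, (P j).IsHermitian) (X : ι → Matrix n n R) :
    (∑ j, P j ⊗ₖ X j)ᴴ = ∑ j, P j ⊗ₖ (X j)ᴴ := by
  simp only [conjTranspose_sum, conjTranspose_kronecker, fun j => (hP j).eq]

variable [Fintype m] [DecidableEq m] {P : ι → Matrix m m R}

theorem sum_kronecker_one [DecidableEq n] (hP : CompleteOrthogonalIdempotents P) :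
    ∑ j, P j ⊗ₖ (1 : Matrix n n R) = 1 := by
  rw [← sum_kronecker, hP.complete, one_kronecker_one]

variable [Fintype n]

theorem sum_kronecker_mul_sum_kronecker (hP : OrthogonalIdempotents P) (X Y : ι → Matrix n n R) :
    (∑ j, P j ⊗ₖ X j) * (∑ j, P j ⊗ₖ Y j) = ∑ j, P j ⊗ₖ (X j * Y j) := by
  rw [Finset.sum_mul_sum]
  refine Finset.sum_congr rfl fun i _ => ?_
  rw [Fintype.sum_eq_single i fun j hj => by rw [← mul_kronecker_mul, hP.ortho hj.symm,
    zero_kronecker], ← mul_kronecker_mul, (hP.idem i).eq]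

theorem conjTranspose_sum_kronecker_mul_mul [StarRing R] (hP : OrthogonalIdempotents P)
    (hPh : ∀ j, (P j).IsHermitian) (U X : ι → Matrix n n R) :
    (∑ j, P j ⊗ₖ U j)ᴴ * (∑ j, P j ⊗ₖ X j) * (∑ j, P j ⊗ₖ U j) =
      ∑ j, P j ⊗ₖ ((U j)ᴴ * X j * U j) := by
  rw [conjTranspose_sum_kronecker hPh, sum_kronecker_mul_sum_kronecker hP,
    sum_kronecker_mul_sum_kronecker hP]

variable [DecidableEq n]

def sumKroneckerAlgHom (hP : CompleteOrthogonalIdempotents P) :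
    (ι → Matrix n n R) →ₐ[R] Matrix (m × n) (m × n) R where
  toFun X := ∑ j, P j ⊗ₖ X j
  map_one' := sum_kronecker_one hP
  map_mul' X Y := (sum_kronecker_mul_sum_kronecker hP.toOrthogonalIdempotents X Y).symm
  map_zero' := by simp
  map_add' X Y := by simp [kronecker_add, Finset.sum_add_distrib]
  commutes' r := by
    simp only [Pi.algebraMap_apply, Algebra.algebraMap_eq_smul_one, ← smul_sum_kronecker,
      sum_kronecker_one hP]

theorem sum_kronecker_mem_unitaryGroup [StarRing R] (hP : CompleteOrthogonalIdempotents P)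
    (hPh : ∀ j, (P j).IsHermitian) {U : ι → Matrix n n R} (hU : ∀ j, U j ∈ unitaryGroup n R) :
    ∑ j, P j ⊗ₖ U j ∈ unitaryGroup (m × n) R := by
  rw [Unitary.mem_iff, star_eq_conjTranspose, conjTranspose_sum_kronecker hPh,
    sum_kronecker_mul_sum_kronecker hP.toOrthogonalIdempotents,
    sum_kronecker_mul_sum_kronecker hP.toOrthogonalIdempotents]
  simp only [← star_eq_conjTranspose, fun j => Unitary.star_mul_self_of_mem (hU j),
    fun j => Unitary.mul_star_self_of_mem (hU j), sum_kronecker_one hP, and_self]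

theorem exp_sum_kronecker {𝕜 : Type*} [RCLike 𝕜] {P : ι → Matrix m m 𝕜}
    (hP : CompleteOrthogonalIdempotents P) (X : ι → Matrix n n 𝕜) :
    NormedSpace.exp (∑ j, P j ⊗ₖ X j) = ∑ j, P j ⊗ₖ NormedSpace.exp (X j) := by
  open scoped Norms.Operator in
  have hcont : Continuous (sumKroneckerAlgHom hP (n := n)) :=
    (sumKroneckerAlgHom hP).toLinearMap.continuous_of_finiteDimensional
  open scoped Norms.Operator in
  exact (NormedSpace.map_exp _ hcont X).symm.trans
    (Finset.sum_congr rfl fun j _ => congrArg (P j ⊗ₖ ·) (exp_pi_apply X j))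

end Matrix

theorem exp_transformed_projection_tensor_decomposition_general
    (d d' N : ℕ)
    (P : Fin N → Matrix (Fin d) (Fin d) ℂ)
    (A B : Fin N → Matrix (Fin d') (Fin d') ℂ)
    (S : Matrix (Fin d) (Fin d) ℂ)
    (T : Fin N → Matrix (Fin d') (Fin d') ℂ)
    (hPsa : ∀ j, (P j)ᴴ = P j)
    (hPorth : ∀ j k, P j * P k = if j = k then P j else 0)
    (hPsum : ∑ j, P j = 1)
    (hS : S ∈ Matrix.unitaryGroup (Fin d) ℂ)
    (hT : ∀ j, T j ∈ Matrix.unitaryGroup (Fin d') ℂ)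
    (t : ℝ)
    (hTB : ∀ j, T j = NormedSpace.exp ((-(Complex.I * t)) • B j)) :
    NormedSpace.exp
        ((-(Complex.I * t)) • ∑ j, (Sᴴ * P j * S) ⊗ₖ ((T j)ᴴ * A j * T j)) =
      (S ⊗ₖ (1 : Matrix (Fin d') (Fin d') ℂ))ᴴ *
        (NormedSpace.exp ((-(Complex.I * t)) • ∑ j, P j ⊗ₖ B j))ᴴ *
        NormedSpace.exp ((-(Complex.I * t)) • ∑ j, P j ⊗ₖ A j) *
        NormedSpace.exp ((-(Complex.I * t)) • ∑ j, P j ⊗ₖ B j) *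
        (S ⊗ₖ (1 : Matrix (Fin d') (Fin d') ℂ)) := by
  set c : ℂ := -(Complex.I * t)
  have hP : CompleteOrthogonalIdempotents P :=
    ⟨OrthogonalIdempotents.iff_mul_eq.mpr hPorth, hPsum⟩
  have hW : NormedSpace.exp (c • ∑ j, P j ⊗ₖ B j) = ∑ j, P j ⊗ₖ T j := by
    simp only [smul_sum_kronecker, exp_sum_kronecker hP, ← hTB]
  set W := ∑ j, P j ⊗ₖ T j
  set M := S ⊗ₖ (1 : Matrix (Fin d') (Fin d') ℂ)
  have hV : W * M ∈ unitaryGroup (Fin d × Fin d') ℂ :=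
    mul_mem (sum_kronecker_mem_unitaryGroup hP hPsa hT) (kronecker_mem_unitary hS (one_mem _))
  have hconj : (W * M)ᴴ * (∑ j, P j ⊗ₖ A j) * (W * M) =
      ∑ j, (Sᴴ * P j * S) ⊗ₖ ((T j)ᴴ * A j * T j) :=
    calc (W * M)ᴴ * (∑ j, P j ⊗ₖ A j) * (W * M)
        = Mᴴ * (Wᴴ * (∑ j, P j ⊗ₖ A j) * W) * M := by
          simp only [conjTranspose_mul, mul_assoc]
      _ = Mᴴ * (∑ j, P j ⊗ₖ ((T j)ᴴ * A j * T j)) * M := by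
          rw [conjTranspose_sum_kronecker_mul_mul hP.toOrthogonalIdempotents hPsa]
      _ = _ := by
          simp only [M, Finset.mul_sum, Finset.sum_mul,
            conjTranspose_kronecker_one_mul_kronecker_mul]
  rw [hW, ← hconj, ← smul_mul_assoc, ← mul_smul_comm,
    exp_conjTranspose_mul_mul_of_mem_unitaryGroup hV, conjTranspose_mul]
  simp only [mul_assoc]

theorem exp_transformed_projection_tensor_decomposition
    (d d' N : ℕ)
    (P : Fin N → Matrix (Fin d) (Fin d) ℂ)
    (A B : Fin N → Matrix (Fin d') (Fin d') ℂ)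
    (S : Matrix (Fin d) (Fin d) ℂ)
    (T : Fin N → Matrix (Fin d') (Fin d') ℂ)
    (hPsa : ∀ j, (P j)ᴴ = P j) (hAsa : ∀ j, (A j)ᴴ = A j)
    (hBsa : ∀ j, (B j)ᴴ = B j)
    (hPorth : ∀ j k, P j * P k = if j = k then P j else 0)
    (hPsum : ∑ j, P j = 1)
    (hS : S ∈ Matrix.unitaryGroup (Fin d) ℂ)
    (hT : ∀ j, T j ∈ Matrix.unitaryGroup (Fin d') ℂ)
    (t : ℝ)
    (hTB : ∀ j, T j = NormedSpace.exp ((-(Complex.I * t)) • B j)) :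
    NormedSpace.exp
        ((-(Complex.I * t)) • ∑ j, (Sᴴ * P j * S) ⊗ₖ ((T j)ᴴ * A j * T j)) =
      (S ⊗ₖ (1 : Matrix (Fin d') (Fin d') ℂ))ᴴ *
        (NormedSpace.exp ((-(Complex.I * t)) • ∑ j, P j ⊗ₖ B j))ᴴ *
        NormedSpace.exp ((-(Complex.I * t)) • ∑ j, P j ⊗ₖ A j) *
        NormedSpace.exp ((-(Complex.I * t)) • ∑ j, P j ⊗ₖ B j) *
        (S ⊗ₖ (1 : Matrix (Fin d') (Fin d') ℂ)) :=
  exp_transformed_projection_tensor_decomposition_general d d' N P A B S T hPsa hPorth hPsum hS hT t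
    hTB
end

section
/- The matrix Q_N = QFT_N† C_N QFT_N, with C_N = diag(0,…,N-1), is Hermitian and its entries are (Q_N)_{j,j} = (N-1)/2 and (Q_N)_{j,k} = 1/(ω^{k-j} - 1) for j ≠ k, where ω = exp(2πi/N). -/
open Matrix Finset

/-!
Since `|ω| = 1`, the `(j, k)` entry of `QFT_Nᴴ C_N QFT_N` is `(1/N) ∑_{m<N} m z^m` with
`z = ω^(k-j)`. For `j = k` this is the arithmetic sum `(N - 1)/2`. For `j ≠ k`, `z ≠ 1` is an
`N`-th root of unity, so the geometric sum `∑ z^m` vanishes and multiplying by `z - 1`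
telescopes `∑ m z^m` to `N`.
-/

theorem ZMod.sum_val_eq_sum_range {M : Type*} [AddCommMonoid M] (N : ℕ) [NeZero N] (f : ℕ → M) :
    ∑ m : ZMod N, f m.val = ∑ m ∈ range N, f m := by
  refine Finset.sum_nbij' (fun m => m.val) (fun i => (i : ZMod N)) ?_ ?_ ?_ ?_ ?_ <;>
    intros <;> simp_all [ZMod.val_lt, Nat.mod_eq_of_lt]

section PowerSums

variable {R : Type*} [CommRing R]

theorem sum_range_natCast_mul_two (n : ℕ) : (∑ m ∈ range n, (m : R)) * 2 = n * (n - 1) := by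
  induction n with
  | zero => simp
  | succ n ih =>
    rw [sum_range_succ, add_mul, ih]
    push_cast
    ring

theorem mul_sub_one_mul_sum_range_natCast_mul_pow (z : R) (n : ℕ) :
    (z - 1) * ∑ m ∈ range n, (m : R) * z ^ m = (n - 1) * z ^ n - ∑ m ∈ range n, z ^ m + 1 := by
  induction n with
  | zero => simp
  | succ n ih =>
    rw [sum_range_succ, sum_range_succ, mul_add, ih]
    push_cast
    ring

theorem sum_range_natCast_mul_pow_of_pow_eq_one {K : Type*} [Field K] {z : K} {n : ℕ}
    (hz : z ^ n = 1) (hz1 : z ≠ 1) : ∑ m ∈ range n, (m : K) * z ^ m = n / (z - 1) := by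
  have hgeom : ∑ m ∈ range n, z ^ m = 0 := by simp [geom_sum_eq hz1, hz]
  have key := mul_sub_one_mul_sum_range_natCast_mul_pow z n
  rw [hz, hgeom] at key
  rw [eq_div_iff (sub_ne_zero.mpr hz1)]
  linear_combination key

end PowerSums

variable {N : ℕ} [NeZero N] {ω : ℂ}

theorem star_pow_mul_pow_val_eq (hω : ω ^ N = 1) (m j k : ZMod N) :
    star (ω ^ (m.val * j.val)) * ω ^ (m.val * k.val) = (ω ^ (k - j).val) ^ m.val := by
  have hnorm : ‖ω ^ (m.val * j.val)‖ = 1 := by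
    rw [norm_pow, Complex.norm_eq_one_of_pow_eq_one hω (NeZero.ne N), one_pow]
  have hexp : m.val * k.val ≡ m.val * j.val + (k - j).val * m.val [MOD N] := by
    rw [← ZMod.natCast_eq_natCast_iff]
    push_cast [ZMod.natCast_zmod_val]
    ring
  rw [← pow_mul, Complex.star_def, ← RCLike.inv_eq_conj hnorm, pow_eq_pow_of_modEq hexp hω,
    pow_add, inv_mul_cancel_left₀ (ne_zero_of_norm_ne_zero (hnorm.symm ▸ one_ne_zero))]

variable (N ω) in
noncomputable def qft : Matrix (ZMod N) (ZMod N) ℂ :=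
  of fun j k => ω ^ (j.val * k.val) / Real.sqrt N

variable (N ω) in
noncomputable def qpeMultiplier : Matrix (ZMod N) (ZMod N) ℂ :=
  (qft N ω)ᴴ * diagonal (fun j : ZMod N => (j.val : ℂ)) * qft N ω

theorem qpeMultiplier_isHermitian : (qpeMultiplier N ω).IsHermitian :=
  isHermitian_conjTranspose_mul_mul _ <|
    isHermitian_diagonal_iff.mpr fun _ => IsSelfAdjoint.natCast _

theorem qpeMultiplier_apply (hω : ω ^ N = 1) (j k : ZMod N) :
    qpeMultiplier N ω j k = (∑ m ∈ range N, (m : ℂ) * (ω ^ (k - j).val) ^ m) / N := by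
  have hsqrt : (Real.sqrt N : ℂ) * Real.sqrt N = N := by
    rw [← Complex.ofReal_mul, Real.mul_self_sqrt (Nat.cast_nonneg N), Complex.ofReal_natCast]
  have hterm : ∀ m : ZMod N, star (qft N ω m j) * m.val * qft N ω m k
      = (m.val : ℂ) * (ω ^ (k - j).val) ^ m.val / N := by
    intro m
    simp only [qft, of_apply, star_div₀, Complex.star_def, Complex.conj_ofReal]
    rw [← Complex.star_def, ← star_pow_mul_pow_val_eq hω m j k, ← hsqrt]
    ring
  rw [qpeMultiplier, mul_apply]
  simp only [mul_diagonal, conjTranspose_apply, hterm]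
  rw [← sum_div, ZMod.sum_val_eq_sum_range N fun m => (m : ℂ) * (ω ^ (k - j).val) ^ m]

theorem qpeMultiplier_apply_self (hω : ω ^ N = 1) (j : ZMod N) :
    qpeMultiplier N ω j j = ((N : ℂ) - 1) / 2 := by
  have hN : (N : ℂ) ≠ 0 := Nat.cast_ne_zero.mpr (NeZero.ne N)
  rw [qpeMultiplier_apply hω, sub_self, ZMod.val_zero, pow_zero]
  simp only [one_pow, mul_one]
  rw [div_eq_div_iff hN two_ne_zero, sum_range_natCast_mul_two]
  ring

theorem qpeMultiplier_apply_of_ne (hω : IsPrimitiveRoot ω N) {j k : ZMod N} (hjk : j ≠ k) :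
    qpeMultiplier N ω j k = 1 / (ω ^ (k - j).val - 1) := by
  have hN : (N : ℂ) ≠ 0 := Nat.cast_ne_zero.mpr (NeZero.ne N)
  have hval : (k - j).val ≠ 0 := by simpa [sub_eq_zero] using hjk.symm
  have hz1 : ω ^ (k - j).val ≠ 1 := hω.pow_ne_one_of_pos_of_lt hval (ZMod.val_lt _)
  have hzN : (ω ^ (k - j).val) ^ N = 1 := by rw [← pow_mul, mul_comm, pow_mul, hω.pow_eq_one, one_pow]
  rw [qpeMultiplier_apply hω.pow_eq_one, sum_range_natCast_mul_pow_of_pow_eq_one hzN hz1]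
  field_simp

theorem qpe_multiplier_entries_general
    (N : ℕ) [NeZero N]
    (ω : ℂ) (hω : ω = Complex.exp (2 * Real.pi * Complex.I / N))
    (F : Matrix (ZMod N) (ZMod N) ℂ)
    (hF : ∀ j k, F j k = ω ^ (j.val * k.val) / Real.sqrt N)
    (Q : Matrix (ZMod N) (ZMod N) ℂ)
    (hQ : Q = Fᴴ * Matrix.diagonal (fun j : ZMod N => (j.val : ℂ)) * F) :
    Q.IsHermitian ∧ (∀ j, Q j j = ((N : ℂ) - 1) / 2) ∧
      ∀ j k, j ≠ k → Q j k = 1 / (ω ^ (k - j).val - 1) := by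
  have hprim : IsPrimitiveRoot ω N := hω ▸ Complex.isPrimitiveRoot_exp N (NeZero.ne N)
  obtain rfl : Q = qpeMultiplier N ω := by
    rw [hQ, show F = qft N ω from ext hF, qpeMultiplier]
  exact ⟨qpeMultiplier_isHermitian, qpeMultiplier_apply_self hprim.pow_eq_one,
    fun _ _ => qpeMultiplier_apply_of_ne hprim⟩

theorem qpe_multiplier_entries
    (N : ℕ) (hN : 2 ≤ N) [NeZero N]
    (ω : ℂ) (hω : ω = Complex.exp (2 * Real.pi * Complex.I / N))
    (F : Matrix (ZMod N) (ZMod N) ℂ)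
    (hF : ∀ j k, F j k = ω ^ (j.val * k.val) / Real.sqrt N)
    (Q : Matrix (ZMod N) (ZMod N) ℂ)
    (hQ : Q = Fᴴ * Matrix.diagonal (fun j : ZMod N => (j.val : ℂ)) * F) :
    Q.IsHermitian ∧ (∀ j, Q j j = ((N : ℂ) - 1) / 2) ∧
      ∀ j k, j ≠ k → Q j k = 1 / (ω ^ (k - j).val - 1) :=
  qpe_multiplier_entries_general N ω hω F hF Q hQ
end

section
/- Let A ∈ ℂ^{N×N} be circulant with A_{j,k} = c_{(k-j) mod N}, N = N_0 N_1, ω = exp(2πi/N), and let v_m = QFT_{N_0}† |m⟩ (entries ω^{-N_1 j m}/√{N_0}). Then A = ∑_{m=0}^{N_0-1} |v_m⟩⟨v_m| ⊗ (∑_{ℓ=0}^{N_0-1} ω^{-ℓ m N_1} A^{(ℓ)}), where A^{(ℓ)}_{j,k} = c_{(k-j+N_1 ℓ) mod N}. -/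
/-!
Put `ζ = ω ^ N₁`, a primitive `N₀`-th root of unity. The `(j₁, k₁)` block of the right-hand side
is `∑ ℓ, (N₀⁻¹ ∑ m, ζ ^ ((k₁ - j₁ - ℓ) m)) • A⁽ℓ⁾`, and by orthogonality of characters of `ℤ/N₀`
the inner sum keeps only the `ℓ < N₀` with `ℓ ≡ k₁ - j₁ (mod N₀)`. For that `ℓ` we have
`N₁ ℓ ≡ N₁ (k₁ - j₁) (mod N₀ N₁)`, so `A⁽ℓ⁾` is exactly the `(j₁, k₁)` block of `A`.
-/

open Finset ComplexConjugate

theorem IsPrimitiveRoot.sum_range_zpow_mul {K : Type*} [Field K] {ζ : K} {n : ℕ}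
    (hζ : IsPrimitiveRoot ζ n) (d : ℤ) :
    ∑ m ∈ range n, ζ ^ (d * m) = if (d : ZMod n) = 0 then (n : K) else 0 := by
  simp_rw [zpow_mul, zpow_natCast]
  split_ifs with hd
  · rw [(hζ.zpow_eq_one_iff_dvd d).2 ((ZMod.intCast_zmod_eq_zero_iff_dvd d n).1 hd)]
    simp
  · have hne : ζ ^ d ≠ 1 := fun h =>
      hd ((ZMod.intCast_zmod_eq_zero_iff_dvd d n).2 ((hζ.zpow_eq_one_iff_dvd d).1 h))
    rw [geom_sum_eq hne, ← zpow_natCast, ← zpow_mul, mul_comm, zpow_mul, zpow_natCast,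
      hζ.pow_eq_one, one_zpow, sub_self, zero_div]

theorem Finset.sum_range_ite_natCast_eq {M : Type*} [AddCommMonoid M] {n : ℕ} [NeZero n]
    (a : ZMod n) (f : ℕ → M) :
    ∑ ℓ ∈ range n, (if (ℓ : ZMod n) = a then f ℓ else 0) = f a.val := by
  rw [sum_eq_single_of_mem a.val (mem_range.2 a.val_lt), if_pos (ZMod.natCast_zmod_val a)]
  intro ℓ hℓ hne
  rw [if_neg]
  rintro rfl
  exact hne (ZMod.val_natCast_of_lt (mem_range.1 hℓ)).symm

theorem ZMod.natCast_mul_eq_sub_of_eq_sub {n n₁ ℓ j k : ℕ}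
    (h : (ℓ : ZMod n) = k - j) :
    ((n₁ * ℓ : ℕ) : ZMod (n * n₁)) = (n₁ * k : ℕ) - (n₁ * j : ℕ) := by
  rw [eq_sub_iff_add_eq, ← Nat.cast_add, ZMod.natCast_eq_natCast_iff] at h ⊢
  rw [← mul_add, mul_comm n]
  exact h.mul_left' n₁

theorem IsPrimitiveRoot.sum_range_fourier_projection {ζ : ℂ} {n : ℕ} (hn : n ≠ 0)
    (hζ : IsPrimitiveRoot ζ n) (j k ℓ : ℕ) :
    ∑ m ∈ range n, (ζ ^ (j * m))⁻¹ / (Real.sqrt n : ℂ) * conj ((ζ ^ (k * m))⁻¹ / (Real.sqrt n : ℂ))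
        * (ζ ^ (ℓ * m))⁻¹ = if (ℓ : ZMod n) = k - j then 1 else 0 := by
  have hζ0 : ζ ≠ 0 := hζ.ne_zero hn
  have hconj : conj ζ = ζ⁻¹ := (Complex.inv_eq_conj (hζ.norm'_eq_one hn)).symm
  have hsqrt : (Real.sqrt n : ℂ) * (Real.sqrt n : ℂ) = n := by
    rw [← Complex.ofReal_mul, Real.mul_self_sqrt n.cast_nonneg, Complex.ofReal_natCast]
  have hterm : ∀ m : ℕ, (ζ ^ (j * m))⁻¹ / (Real.sqrt n : ℂ) *
      conj ((ζ ^ (k * m))⁻¹ / (Real.sqrt n : ℂ)) * (ζ ^ (ℓ * m))⁻¹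
        = ζ ^ (((k : ℤ) - j - ℓ) * m) / n := by
    intro m
    rw [map_div₀, map_inv₀, map_pow, hconj, Complex.conj_ofReal, inv_pow, inv_inv, ← hsqrt,
      sub_sub, sub_mul, zpow_sub₀ hζ0, add_mul]
    simp only [zpow_add₀ hζ0, ← Int.natCast_mul, zpow_natCast]
    field_simp
  rw [sum_congr rfl fun m _ => hterm m, ← sum_div, hζ.sum_range_zpow_mul]
  have hcongr : (((k : ℤ) - j - ℓ : ℤ) : ZMod n) = 0 ↔ (ℓ : ZMod n) = k - j := by
    push_cast
    rw [sub_eq_zero, eq_comm]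
  simp only [hcongr]
  split_ifs
  · exact div_self (Nat.cast_ne_zero.2 hn)
  · exact zero_div _

open Matrix Kronecker

theorem circulant_projection_tensor_decomposition
    (N0 N1 : ℕ) (h0 : 0 < N0) (h1 : 0 < N1)
    (c : ZMod (N0 * N1) → ℂ)
    (ω : ℂ) (hω : ω = Complex.exp (2 * Real.pi * Complex.I / (N0 * N1 : ℕ)))
    (A : Matrix (Fin N0 × Fin N1) (Fin N0 × Fin N1) ℂ)
    (hA : ∀ j k, A j k =
      c ((((N1 * k.1 + k.2 : ℕ) : ZMod (N0 * N1))) - ((N1 * j.1 + j.2 : ℕ) : ZMod (N0 * N1))))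
    (Ablock : ℕ → Matrix (Fin N1) (Fin N1) ℂ)
    (hAblock : ∀ ℓ (j k : Fin N1), Ablock ℓ j k =
      c ((((k : ℕ) : ZMod (N0 * N1)) - ((j : ℕ) : ZMod (N0 * N1)) + (N1 * ℓ : ℕ))))
    (v : ℕ → Fin N0 → ℂ)
    (hv : ∀ m (j : Fin N0), v m j = (ω ^ (N1 * (j : ℕ) * m))⁻¹ / Real.sqrt N0) :
    A = ∑ m ∈ Finset.range N0,
      (Matrix.vecMulVec (v m) fun k => (starRingEnd ℂ) (v m k)) ⊗ₖ
        (∑ ℓ ∈ Finset.range N0, (ω ^ (ℓ * m * N1))⁻¹ • Ablock ℓ) := by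
  have : NeZero N0 := ⟨h0.ne'⟩
  have hζ : IsPrimitiveRoot (ω ^ N1) N0 :=
    hω ▸ (Complex.isPrimitiveRoot_exp _ (Nat.mul_ne_zero h0.ne' h1.ne')).pow
      (Nat.mul_pos h0 h1) (mul_comm N0 N1)
  ext ⟨j₁, j₂⟩ ⟨k₁, k₂⟩
  simp only [Matrix.sum_apply, kroneckerMap_apply, vecMulVec_apply, Matrix.smul_apply,
    smul_eq_mul, mul_sum]
  rw [sum_comm]
  calc A (j₁, j₂) (k₁, k₂)
      = Ablock ((k₁ : ZMod N0) - j₁).val j₂ k₂ := by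
        rw [hA, hAblock, ZMod.natCast_mul_eq_sub_of_eq_sub (ZMod.natCast_zmod_val _)]
        push_cast
        ring_nf
    _ = ∑ ℓ ∈ range N0, (if (ℓ : ZMod N0) = k₁ - j₁ then 1 else 0) * Ablock ℓ j₂ k₂ := by
        simp only [ite_mul, one_mul, zero_mul, sum_range_ite_natCast_eq]
    _ = _ := by
        refine sum_congr rfl fun ℓ _ => ?_
        rw [← hζ.sum_range_fourier_projection h0.ne' j₁ k₁ ℓ, sum_mul]
        refine sum_congr rfl fun m _ => ?_
        simp only [hv]
        ring_nf
end
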